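/- Weak equality is a congruence with respect to hereditary substitution: if E₁ ≈ E₂ and K₁ ≈ K₂ then K₁[X:=E₁]_k ≈ K₂[X:=E₂]_k; likewise for types (D₁ ≈ D₂ implies D₁[X:=E₁]_k ≈ D₂[X:=E₂]_k), spines, and reducing applications (D₁ ≈ D₂ implies E₁ ·_k D₁ ≈ E₂ ·_k D₂). -/

import Mathlib

set_option autoImplicit true
set_option maxHeartbeats 1000000
set_option linter.unusedVariables false

/-- Shapes (simple kinds): `k ::= ∗ | k → k`. -/
inductive SKind : Type
  | star
  | arr (j k : SKind)
/-! ## Spine-form syntax of Fω.. types and kinds (de Bruijn representation). -/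

mutual
/-- Eliminations: a head applied to a spine of arguments, `E ::= F E⃗`. -/
inductive SpTy : Type
  | elim (h : SpHead) (s : SpSpine)

/-- Heads: `F ::= X | ⊤ | ⊥ | D → E | ∀X:K.E | λX:K.E`. -/
inductive SpHead : Type
  | var (x : ℕ)
  | top
  | bot
  | arr (a b : SpTy)
  | all (k : SpKd) (a : SpTy)
  | lam (k : SpKd) (a : SpTy)

/-- Spines: finite sequences of eliminations. -/
inductive SpSpine : Type
  | nil
  | cons (a : SpTy) (s : SpSpine)

/-- Kinds in spine form: `K ::= A..B | (X:J)→K`. -/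
inductive SpKd : Type
  | intv (a b : SpTy)
  | pi (j k : SpKd)
end

/-- Shape erasure of spine-form kinds: `|A..B| = ∗`, `|(X:J)→K| = |J| → |K|`. -/
def SpKd.shape : SpKd → SKind
  | .intv _ _ => .star
  | .pi j k => .arr j.shape k.shape

/-- Spine concatenation. -/
def SpSpine.append : SpSpine → SpSpine → SpSpine
  | .nil, s' => s'
  | .cons a s, s' => .cons a (s.append s')

/-- (Non-reducing) application of an elimination to a spine. -/
def SpTy.appSp : SpTy → SpSpine → SpTy
  | .elim h s, s' => .elim h (s.append s')

/-- (Non-reducing) application of an elimination to a single argument. -/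
def SpTy.app1 (e d : SpTy) : SpTy := e.appSp (.cons d .nil)

mutual
/-- Shift: increment all variables `≥ c` by one. -/
def SpTy.shift (c : ℕ) : SpTy → SpTy
  | .elim h s => .elim (h.shift c) (s.shift c)

def SpHead.shift (c : ℕ) : SpHead → SpHead
  | .var x => if x < c then .var x else .var (x + 1)
  | .top => .top
  | .bot => .bot
  | .arr a b => .arr (a.shift c) (b.shift c)
  | .all k a => .all (k.shift c) (a.shift (c + 1))
  | .lam k a => .lam (k.shift c) (a.shift (c + 1))

def SpSpine.shift (c : ℕ) : SpSpine → SpSpine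
  | .nil => .nil
  | .cons a s => .cons (a.shift c) (s.shift c)

def SpKd.shift (c : ℕ) : SpKd → SpKd
  | .intv a b => .intv (a.shift c) (b.shift c)
  | .pi j k => .pi (j.shift c) (k.shift (c + 1))
end

/-- Weakening by `n` fresh innermost variables. -/
def SpTy.weaken (n : ℕ) (e : SpTy) : SpTy := (SpTy.shift 0)^[n] e

/-- Weakening of kinds by `n` fresh innermost variables. -/
def SpKd.weaken (n : ℕ) (k : SpKd) : SpKd := (SpKd.shift 0)^[n] k

mutual
/-- Ordinary (capture-avoiding, non-hereditary) substitution on spine form. -/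
def SpTy.subst : SpTy → ℕ → SpTy → SpTy
  | .elim (.var y) s, x, v =>
      if y = x then v.appSp (s.subst x v)
      else .elim (.var (if x < y then y - 1 else y)) (s.subst x v)
  | .elim .top s, x, v => .elim .top (s.subst x v)
  | .elim .bot s, x, v => .elim .bot (s.subst x v)
  | .elim (.arr a b) s, x, v => .elim (.arr (a.subst x v) (b.subst x v)) (s.subst x v)
  | .elim (.all k a) s, x, v =>
      .elim (.all (k.subst x v) (a.subst (x + 1) (v.shift 0))) (s.subst x v)
  | .elim (.lam k a) s, x, v =>
      .elim (.lam (k.subst x v) (a.subst (x + 1) (v.shift 0))) (s.subst x v)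

def SpSpine.subst : SpSpine → ℕ → SpTy → SpSpine
  | .nil, _, _ => .nil
  | .cons a s, x, v => .cons (a.subst x v) (s.subst x v)

def SpKd.subst : SpKd → ℕ → SpTy → SpKd
  | .intv a b, x, v => .intv (a.subst x v) (b.subst x v)
  | .pi j k, x, v => .pi (j.subst x v) (k.subst (x + 1) (v.shift 0))
end

mutual
/-- Hereditary substitution `e[x := v]_k` of the elimination `v` for variable
`x` at shape `k`, defined mutually with reducing application by recursion on
the shape `k`. -/
def SpTy.hsubst : SpTy → ℕ → SKind → SpTy → SpTy
  | .elim (.var y) s, x, k, v =>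
      if y = x then SpTy.rappSp v k (s.hsubst x k v)
      else .elim (.var (if x < y then y - 1 else y)) (s.hsubst x k v)
  | .elim .top s, x, k, v => .elim .top (s.hsubst x k v)
  | .elim .bot s, x, k, v => .elim .bot (s.hsubst x k v)
  | .elim (.arr a b) s, x, k, v =>
      .elim (.arr (a.hsubst x k v) (b.hsubst x k v)) (s.hsubst x k v)
  | .elim (.all j a) s, x, k, v =>
      .elim (.all (j.hsubst x k v) (a.hsubst (x + 1) k (v.shift 0))) (s.hsubst x k v)
  | .elim (.lam j a) s, x, k, v =>
      .elim (.lam (j.hsubst x k v) (a.hsubst (x + 1) k (v.shift 0))) (s.hsubst x k v)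
termination_by e x k v => (sizeOf k, 1, sizeOf e)

/-- Hereditary substitution in spines (pointwise). -/
def SpSpine.hsubst : SpSpine → ℕ → SKind → SpTy → SpSpine
  | .nil, _, _, _ => .nil
  | .cons a s, x, k, v => .cons (a.hsubst x k v) (s.hsubst x k v)
termination_by s x k v => (sizeOf k, 1, sizeOf s)

/-- Hereditary substitution in kinds. -/
def SpKd.hsubst : SpKd → ℕ → SKind → SpTy → SpKd
  | .intv a b, x, k, v => .intv (a.hsubst x k v) (b.hsubst x k v)
  | .pi j k', x, k, v => .pi (j.hsubst x k v) (k'.hsubst (x + 1) k (v.shift 0))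
termination_by K x k v => (sizeOf k, 1, sizeOf K)

/-- Reducing application `d ·_k v` to a single argument:  β-contracts when `d`
is an operator abstraction and `k` is an arrow shape. -/
def SpTy.rapp : SpTy → SKind → SpTy → SpTy
  | d, .star, v => d.app1 v
  | .elim (.lam _ d') .nil, .arr k1 _, v => d'.hsubst 0 k1 v
  | .elim (.var y) s, .arr _ _, v => SpTy.app1 (.elim (.var y) s) v
  | .elim .top s, .arr _ _, v => SpTy.app1 (.elim .top s) v
  | .elim .bot s, .arr _ _, v => SpTy.app1 (.elim .bot s) v
  | .elim (.arr a b) s, .arr _ _, v => SpTy.app1 (.elim (.arr a b) s) v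
  | .elim (.all j a) s, .arr _ _, v => SpTy.app1 (.elim (.all j a) s) v
  | .elim (.lam j a) (.cons b s), .arr _ _, v => SpTy.app1 (.elim (.lam j a) (.cons b s)) v
termination_by d k v => (sizeOf k, 0, 0)

/-- Reducing application `d ·_k s⃗` to a spine, unwinding `s⃗` along `k`. -/
def SpTy.rappSp : SpTy → SKind → SpSpine → SpTy
  | d, _, .nil => d
  | d, .arr k1 k2, .cons e es => SpTy.rappSp (d.rapp (.arr k1 k2) e) k2 es
  | d, .star, .cons e es => d.appSp (.cons e es)
termination_by d k s => (sizeOf k, 0, sizeOf s + 1)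
end
/-! ## Weak equality `≈` on spine-form types and kinds: the congruence that
identifies operator abstractions up to the *shape* of their domain
annotations:  `λX:J.A ≈ λX:K.B` whenever `|J| ≡ |K|` and `A ≈ B`. -/

mutual
inductive WEqTy : SpTy → SpTy → Prop
  | elim : WEqHead h₁ h₂ → WEqSp s₁ s₂ → WEqTy (.elim h₁ s₁) (.elim h₂ s₂)

inductive WEqHead : SpHead → SpHead → Prop
  | var : WEqHead (.var x) (.var x)
  | top : WEqHead .top .top
  | bot : WEqHead .bot .bot
  | arr : WEqTy a₁ a₂ → WEqTy b₁ b₂ → WEqHead (.arr a₁ b₁) (.arr a₂ b₂)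
  | all : WEqKd k₁ k₂ → WEqTy a₁ a₂ → WEqHead (.all k₁ a₁) (.all k₂ a₂)
  | lam : k₁.shape = k₂.shape → WEqTy a₁ a₂ → WEqHead (.lam k₁ a₁) (.lam k₂ a₂)

inductive WEqSp : SpSpine → SpSpine → Prop
  | nil : WEqSp .nil .nil
  | cons : WEqTy a₁ a₂ → WEqSp s₁ s₂ → WEqSp (.cons a₁ s₁) (.cons a₂ s₂)

inductive WEqKd : SpKd → SpKd → Prop
  | intv : WEqTy a₁ a₂ → WEqTy b₁ b₂ → WEqKd (.intv a₁ b₁) (.intv a₂ b₂)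
  | pi : WEqKd j₁ j₂ → WEqKd k₁ k₂ → WEqKd (.pi j₁ k₁) (.pi j₂ k₂)
end

/-! The four statements are proved simultaneously, following the recursion that defines
hereditary substitution and reducing application: lexicographically on the shape `k`, then on
the size of the term. The only case that does not go through by congruence is the β-step of
`·_k`; there both sides contract at once, because contraction is driven by the shape `k` and not
by the domain annotations that weak equality is allowed to change. -/

theorem WEqSp.append {s₁ s₂ t₁ t₂ : SpSpine} (hs : WEqSp s₁ s₂) (ht : WEqSp t₁ t₂) :
    WEqSp (s₁.append t₁) (s₂.append t₂) := by
  cases hs with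
  | nil => exact ht
  | cons ha hs => exact .cons ha (hs.append ht)

theorem WEqTy.appSp {a₁ a₂ : SpTy} {s₁ s₂ : SpSpine} (ha : WEqTy a₁ a₂) (hs : WEqSp s₁ s₂) :
    WEqTy (a₁.appSp s₁) (a₂.appSp s₂) := by
  cases ha with
  | elim hh ht => exact .elim hh (ht.append hs)

theorem WEqTy.app1 {a₁ a₂ d₁ d₂ : SpTy} (ha : WEqTy a₁ a₂) (hd : WEqTy d₁ d₂) :
    WEqTy (a₁.app1 d₁) (a₂.app1 d₂) :=
  ha.appSp (.cons hd .nil)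

theorem SpKd.shape_shift (c : ℕ) : ∀ k : SpKd, (k.shift c).shape = k.shape
  | .intv _ _ => rfl
  | .pi j k => by simp only [SpKd.shift, SpKd.shape, shape_shift c j, shape_shift (c + 1) k]

theorem SpKd.shape_hsubst (k : SKind) : ∀ (j : SpKd) (x : ℕ) (v : SpTy),
    (j.hsubst x k v).shape = j.shape
  | .intv _ _, _, _ => by simp only [SpKd.hsubst, SpKd.shape]
  | .pi j j', x, v => by
    simp only [SpKd.hsubst, SpKd.shape, shape_hsubst k j x v, shape_hsubst k j' (x + 1)]

mutual
theorem WEqTy.shift {a₁ a₂ : SpTy} (h : WEqTy a₁ a₂) (c : ℕ) : WEqTy (a₁.shift c) (a₂.shift c) :=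
  match h with
  | .elim hh hs => .elim (hh.shift c) (hs.shift c)

theorem WEqHead.shift {h₁ h₂ : SpHead} (h : WEqHead h₁ h₂) (c : ℕ) :
    WEqHead (h₁.shift c) (h₂.shift c) := by
  cases h with
  | var => simp only [SpHead.shift]; split <;> exact .var
  | top => exact .top
  | bot => exact .bot
  | arr ha hb => exact .arr (ha.shift c) (hb.shift c)
  | all hk ha => exact .all (hk.shift c) (ha.shift (c + 1))
  | lam hk ha =>
    exact .lam (by rw [SpKd.shape_shift, SpKd.shape_shift, hk]) (ha.shift (c + 1))

theorem WEqSp.shift {s₁ s₂ : SpSpine} (h : WEqSp s₁ s₂) (c : ℕ) :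
    WEqSp (s₁.shift c) (s₂.shift c) :=
  match h with
  | .nil => .nil
  | .cons ha hs => .cons (ha.shift c) (hs.shift c)

theorem WEqKd.shift {k₁ k₂ : SpKd} (h : WEqKd k₁ k₂) (c : ℕ) :
    WEqKd (k₁.shift c) (k₂.shift c) :=
  match h with
  | .intv ha hb => .intv (ha.shift c) (hb.shift c)
  | .pi hj hk => .pi (hj.shift c) (hk.shift (c + 1))
end

mutual
theorem WEqKd.hsubst {K₁ K₂ : SpKd} {E₁ E₂ : SpTy} (hK : WEqKd K₁ K₂) (x : ℕ) (k : SKind)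
    (hE : WEqTy E₁ E₂) : WEqKd (K₁.hsubst x k E₁) (K₂.hsubst x k E₂) := by
  cases hK with
  | intv ha hb =>
    rw [SpKd.hsubst, SpKd.hsubst]
    exact .intv (ha.hsubst x k hE) (hb.hsubst x k hE)
  | pi hj hk =>
    rw [SpKd.hsubst, SpKd.hsubst]
    exact .pi (hj.hsubst x k hE) (hk.hsubst (x + 1) k (hE.shift 0))
termination_by (sizeOf k, 1, sizeOf K₁)

theorem WEqTy.hsubst {D₁ D₂ E₁ E₂ : SpTy} (hD : WEqTy D₁ D₂) (x : ℕ) (k : SKind)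
    (hE : WEqTy E₁ E₂) : WEqTy (D₁.hsubst x k E₁) (D₂.hsubst x k E₂) := by
  obtain ⟨hh, hs⟩ := hD
  have hs' := hs.hsubst x k hE
  cases hh <;> simp only [SpTy.hsubst]
  case var =>
    split
    · exact hE.rappSp k hs'
    · exact .elim .var hs'
  case top => exact .elim .top hs'
  case bot => exact .elim .bot hs'
  case arr ha hb => exact .elim (.arr (ha.hsubst x k hE) (hb.hsubst x k hE)) hs'
  case all hj ha => exact .elim (.all (hj.hsubst x k hE) (ha.hsubst (x + 1) k (hE.shift 0))) hs'
  case lam hj ha =>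
    exact .elim (.lam (by rw [SpKd.shape_hsubst, SpKd.shape_hsubst, hj])
      (ha.hsubst (x + 1) k (hE.shift 0))) hs'
termination_by (sizeOf k, 1, sizeOf D₁)

theorem WEqSp.hsubst {s₁ s₂ : SpSpine} {E₁ E₂ : SpTy} (hs : WEqSp s₁ s₂) (x : ℕ) (k : SKind)
    (hE : WEqTy E₁ E₂) : WEqSp (s₁.hsubst x k E₁) (s₂.hsubst x k E₂) := by
  cases hs with
  | nil => simpa only [SpSpine.hsubst] using .nil
  | cons ha ht => simpa only [SpSpine.hsubst] using .cons (ha.hsubst x k hE) (ht.hsubst x k hE)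
termination_by (sizeOf k, 1, sizeOf s₁)

theorem WEqTy.rapp {D₁ D₂ v₁ v₂ : SpTy} (hD : WEqTy D₁ D₂) (k : SKind) (hv : WEqTy v₁ v₂) :
    WEqTy (D₁.rapp k v₁) (D₂.rapp k v₂) := by
  cases k with
  | star => simpa only [SpTy.rapp] using hD.app1 hv
  | arr k₁ k₂ =>
    obtain ⟨hh, hs⟩ := id hD
    cases hh
    case lam hj ha =>
      cases hs with
      | nil => simpa only [SpTy.rapp] using ha.hsubst 0 k₁ hv
      | cons => simpa only [SpTy.rapp] using hD.app1 hv
    all_goals simpa only [SpTy.rapp] using hD.app1 hv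
termination_by (sizeOf k, 0, 0)

theorem WEqTy.rappSp {E₁ E₂ : SpTy} {s₁ s₂ : SpSpine} (hE : WEqTy E₁ E₂) (k : SKind)
    (hs : WEqSp s₁ s₂) : WEqTy (E₁.rappSp k s₁) (E₂.rappSp k s₂) := by
  cases hs with
  | nil => simpa only [SpTy.rappSp] using hE
  | cons ha ht =>
    cases k with
    | star => simpa only [SpTy.rappSp] using hE.appSp (.cons ha ht)
    | arr k₁ k₂ => simpa only [SpTy.rappSp] using (hE.rapp (.arr k₁ k₂) ha).rappSp k₂ ht
termination_by (sizeOf k, 0, sizeOf s₁ + 1)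
end

/-- **Weak equality is a congruence w.r.t. hereditary substitution and
reducing application**: if `E₁ ≈ E₂` then weakly equal kinds, types and
spines have weakly equal hereditary substitutes, and `D₁ ≈ D₂` implies
`E₁ ·_k D₁ ≈ E₂ ·_k D₂`. -/
theorem weq_hsubst :
    ∀ (E₁ E₂ : SpTy), WEqTy E₁ E₂ →
      (∀ (K₁ K₂ : SpKd) (x : ℕ) (k : SKind), WEqKd K₁ K₂ →
        WEqKd (K₁.hsubst x k E₁) (K₂.hsubst x k E₂)) ∧
      (∀ (D₁ D₂ : SpTy) (x : ℕ) (k : SKind), WEqTy D₁ D₂ →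
        WEqTy (D₁.hsubst x k E₁) (D₂.hsubst x k E₂)) ∧
      (∀ (s₁ s₂ : SpSpine) (x : ℕ) (k : SKind), WEqSp s₁ s₂ →
        WEqSp (s₁.hsubst x k E₁) (s₂.hsubst x k E₂)) ∧
      (∀ (D₁ D₂ : SpTy) (k : SKind), WEqTy D₁ D₂ →
        WEqTy (E₁.rapp k D₁) (E₂.rapp k D₂)) :=
  fun _ _ hE =>
    ⟨fun _ _ x k hK => hK.hsubst x k hE, fun _ _ x k hD => hD.hsubst x k hE,
      fun _ _ x k hs => hs.hsubst x k hE, fun _ _ k hD => hE.rapp k hD⟩
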